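/- Let p be a prime, n ≥ 1, and 1 ≤ l ≤ n−1. Let V₀ = span_{ℚ_p}(e₁, …, e_l) and W₀ = span_{ℚ_p}(e_{l+1}, …, e_n). Let L and L' be lattices of W₀ (free ℤ_p-submodules of W₀ of rank n−l), and suppose g ∈ SL_n(ℤ_p) satisfies g·(V₀ ⊕ L) = V₀ ⊕ L'. Let b and b' be ℤ_p-bases of L and L' respectively, and let A and A' be the (n−l)×(n−l) matrices of their coordinates with respect to e_{l+1}, …, e_n. Then v_p(det A) ≡ v_p(det A') (mod n−l); that is, the lattices L and L' have the same type. -/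

import Mathlib

/-!
The projection of `V₀ ⊕ L'` to the last `n - l` coordinates is the `ℤ_p`-span of the columns of
`A'`, a bounded set, so it contains no nonzero `ℚ_p`-line. Since `g` maps the `ℚ_p`-subspace `V₀`
into `V₀ ⊕ L'`, it maps `V₀` into itself: `g` is block upper triangular. Its lower-right block `D`
then carries the projection of `L` into that of `L'`, so `D A = A' U` with `U` integral. The same
holds for `g⁻¹`, whose lower-right block is `D⁻¹`; both blocks are integral, so `|det D| = 1` and
`|det A| ≤ |det A'|`. By symmetry `|det A| = |det A'|`, and the norm determines the valuation.
-/

open scoped MatrixGroups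

/-- The image of a `ℤ_p`-submodule of `ℚ_p^n` under the matrix `A`. -/
noncomputable def zAct {p : ℕ} [Fact p.Prime] {n : ℕ} (A : Matrix (Fin n) (Fin n) ℚ_[p])
    (M : Submodule ℤ_[p] (Fin n → ℚ_[p])) : Submodule ℤ_[p] (Fin n → ℚ_[p]) :=
  M.map (A.mulVecLin.restrictScalars ℤ_[p])

/-- A matrix in `SL_n(ℤ_p)`, viewed as a `p`-adic matrix. -/
noncomputable def pMat {p : ℕ} [Fact p.Prime] {n : ℕ}
    (g : Matrix.SpecialLinearGroup (Fin n) ℤ_[p]) : Matrix (Fin n) (Fin n) ℚ_[p] :=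
  (g : Matrix (Fin n) (Fin n) ℤ_[p]).map ((↑) : ℤ_[p] → ℚ_[p])

/-- The standard subspace `V₀ = ℚ_p e₁ ⊕ ⋯ ⊕ ℚ_p e_l` of `ℚ_p^n`. -/
noncomputable def stdSubspace (p n l : ℕ) [Fact p.Prime] :
    Submodule ℚ_[p] (Fin n → ℚ_[p]) :=
  Submodule.span ℚ_[p] {w | ∃ i : Fin n, i.val < l ∧ w = Pi.single i 1}

/-- The complementary subspace `W₀ = ℚ_p e_{l+1} ⊕ ⋯ ⊕ ℚ_p e_n` of `ℚ_p^n`. -/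
noncomputable def stdComplement (p n l : ℕ) [Fact p.Prime] :
    Submodule ℚ_[p] (Fin n → ℚ_[p]) :=
  Submodule.span ℚ_[p] {w | ∃ i : Fin n, l ≤ i.val ∧ w = Pi.single i 1}

open Matrix

section TailCoordinates

variable {n : ℕ} (l : ℕ)

def tailIdx (i : Fin (n - l)) : Fin n := ⟨l + i, by omega⟩

-- `G.BlockTriangular (tailBlocks l)` says `G i j = 0` for `j < l ≤ i`, i.e. `G` preserves `V₀`.
def tailBlocks (i : Fin n) : Bool := l ≤ (i : ℕ)

def tailCoordMatrix {ι R : Type*} (v : ι → Fin n → R) : Matrix (Fin (n - l)) ι R :=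
  Matrix.of fun i j => v j (tailIdx l i)

lemma tailIdx_injective : Function.Injective (tailIdx (n := n) l) := fun i j h => by
  ext
  simpa [tailIdx] using congrArg Fin.val h

lemma exists_tailIdx_eq {j : Fin n} (hj : l ≤ j) : ∃ i, tailIdx l i = j :=
  ⟨⟨j - l, by omega⟩, by ext; simp [tailIdx]; omega⟩

lemma sum_eq_sum_tailIdx {M : Type*} [AddCommMonoid M] {f : Fin n → M}
    (hf : ∀ j : Fin n, (j : ℕ) < l → f j = 0) : ∑ j, f j = ∑ i, f (tailIdx l i) := by
  refine (Fintype.sum_of_injective _ (tailIdx_injective l) _ _ (fun j hj => hf j ?_)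
    fun _ => rfl).symm
  by_contra! hlj
  exact hj (exists_tailIdx_eq l hlj)

variable {R : Type*} [NonUnitalNonAssocSemiring R] {l} {G : Matrix (Fin n) (Fin n) R}

lemma Matrix.BlockTriangular.apply_tailIdx_eq_zero (hG : G.BlockTriangular (tailBlocks l))
    (i : Fin (n - l)) {j : Fin n} (hj : (j : ℕ) < l) : G (tailIdx l i) j = 0 :=
  hG (by simp [tailBlocks, tailIdx, Nat.not_le.2 hj])

lemma Matrix.BlockTriangular.mulVec_comp_tailIdx (hG : G.BlockTriangular (tailBlocks l))
    (x : Fin n → R) :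
    (G *ᵥ x) ∘ tailIdx l = G.submatrix (tailIdx l) (tailIdx l) *ᵥ (x ∘ tailIdx l) := by
  funext i
  refine sum_eq_sum_tailIdx l fun j hj => ?_
  simp [hG.apply_tailIdx_eq_zero i hj]

lemma Matrix.BlockTriangular.submatrix_tailIdx_mul (hG : G.BlockTriangular (tailBlocks l))
    (H : Matrix (Fin n) (Fin n) R) :
    (G * H).submatrix (tailIdx l) (tailIdx l) =
      G.submatrix (tailIdx l) (tailIdx l) * H.submatrix (tailIdx l) (tailIdx l) := by
  ext i k
  refine sum_eq_sum_tailIdx l fun j hj => ?_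
  simp [hG.apply_tailIdx_eq_zero i hj]

end TailCoordinates

lemma Bornology.IsBounded.eq_zero_of_forall_smul_mem {𝕜 E : Type*} [NontriviallyNormedField 𝕜]
    [NormedAddCommGroup E] [NormedSpace 𝕜 E] {S : Set E} (hS : Bornology.IsBounded S) {y : E}
    (hy : ∀ c : 𝕜, c • y ∈ S) : y = 0 := by
  by_contra hy0
  obtain ⟨C, hC⟩ := hS.exists_norm_le
  obtain ⟨c, hc⟩ := NormedField.exists_lt_norm 𝕜 (C / ‖y‖)
  have hpos : 0 < ‖y‖ := norm_pos_iff.2 hy0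
  have hcy := hC _ (hy c)
  rw [norm_smul] at hcy
  rw [div_lt_iff₀ hpos] at hc
  linarith

namespace Padic

variable {p : ℕ} [Fact p.Prime]

lemma isBounded_span_range {ι κ : Type*} [Fintype ι] [Fintype κ] (v : ι → κ → ℚ_[p]) :
    Bornology.IsBounded (Submodule.span ℤ_[p] (Set.range v) : Set (κ → ℚ_[p])) := by
  rw [← Fintype.range_linearCombination]
  refine (isCompact_range ?_).isBounded
  have h : ⇑(Fintype.linearCombination ℤ_[p] v) = fun c => ∑ i, (c i : ℚ_[p]) • v i := by
    funext c
    simp only [Fintype.linearCombination_apply]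
    rfl
  rw [h]
  fun_prop

lemma valuation_eq_of_norm_eq {x y : ℚ_[p]} (h : ‖x‖ = ‖y‖) : x.valuation = y.valuation := by
  rcases eq_or_ne x 0 with rfl | hx
  · rw [norm_zero, eq_comm, norm_eq_zero] at h
    rw [h]
  · have hy : y ≠ 0 := by
      rintro rfl
      simp [hx] at h
    rw [norm_eq_zpow_neg_valuation hx, norm_eq_zpow_neg_valuation hy] at h
    exact neg_inj.1 (zpow_right_injective₀ (by exact_mod_cast (Fact.out : p.Prime).pos)
      (by exact_mod_cast (Fact.out : p.Prime).one_lt.ne') h)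

lemma norm_det_map_coe_le_one {ι : Type*} [Fintype ι] [DecidableEq ι] (M : Matrix ι ι ℤ_[p]) :
    ‖(M.map ((↑) : ℤ_[p] → ℚ_[p])).det‖ ≤ 1 := by
  have h : (M.map ((↑) : ℤ_[p] → ℚ_[p])).det = (M.det : ℚ_[p]) :=
    (RingHom.map_det PadicInt.Coe.ringHom M).symm
  rw [h]
  exact PadicInt.norm_le_one _

lemma norm_det_le_of_mul_eq {ι : Type*} [Fintype ι] [DecidableEq ι] {D A A' : Matrix ι ι ℚ_[p]}
    (U : Matrix ι ι ℤ_[p]) (hD : ‖D.det‖ = 1) (h : D * A = A' * U.map ((↑) : ℤ_[p] → ℚ_[p])) :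
    ‖A.det‖ ≤ ‖A'.det‖ :=
  calc ‖A.det‖ = ‖(D * A).det‖ := by rw [det_mul, norm_mul, hD, one_mul]
    _ = ‖A'.det‖ * ‖(U.map ((↑) : ℤ_[p] → ℚ_[p])).det‖ := by rw [h, det_mul, norm_mul]
    _ ≤ ‖A'.det‖ := mul_le_of_le_one_right (norm_nonneg _) (norm_det_map_coe_le_one U)

end Padic

section Lattices

variable {p : ℕ} [Fact p.Prime] {n l : ℕ}

lemma pMat_mul (g h : SL(n, ℤ_[p])) : pMat (g * h) = pMat g * pMat h :=
  Matrix.map_mul (f := PadicInt.Coe.ringHom)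

lemma pMat_one : pMat (1 : SL(n, ℤ_[p])) = 1 :=
  Matrix.map_one _ (map_zero PadicInt.Coe.ringHom) (map_one PadicInt.Coe.ringHom)

lemma zAct_inv_zAct (g : SL(n, ℤ_[p])) (M : Submodule ℤ_[p] (Fin n → ℚ_[p])) :
    zAct (pMat g⁻¹) (zAct (pMat g) M) = M := by
  unfold zAct
  rw [← Submodule.map_comp]
  convert Submodule.map_id M
  refine LinearMap.ext fun x => ?_
  change pMat g⁻¹ *ᵥ (pMat g *ᵥ x) = x
  rw [mulVec_mulVec, ← pMat_mul, inv_mul_cancel, pMat_one, one_mulVec]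

lemma tailIdx_apply_eq_zero_of_mem_stdSubspace {v : Fin n → ℚ_[p]} (hv : v ∈ stdSubspace p n l)
    (i : Fin (n - l)) : v (tailIdx l i) = 0 := by
  refine (Submodule.span_le (p := LinearMap.ker (LinearMap.proj (tailIdx l i))).2 ?_ hv :)
  rintro _ ⟨j, hj, rfl⟩
  simp [tailIdx, Pi.single_apply, Fin.ext_iff]
  omega

lemma comp_tailIdx_mem_span_of_mem_sup {ι : Type*} {L' : Submodule ℤ_[p] (Fin n → ℚ_[p])}
    (b' : Module.Basis ι ℤ_[p] L') {y : Fin n → ℚ_[p]}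
    (hy : y ∈ (stdSubspace p n l).restrictScalars ℤ_[p] ⊔ L') :
    y ∘ tailIdx l ∈
      Submodule.span ℤ_[p] (Set.range fun i => (b' i : Fin n → ℚ_[p]) ∘ tailIdx l) := by
  obtain ⟨v, hv, z, hz, rfl⟩ := Submodule.mem_sup.1 hy
  have hv0 : v ∘ tailIdx l = 0 := funext (tailIdx_apply_eq_zero_of_mem_stdSubspace hv)
  have hz' := Submodule.apply_mem_span_image_of_mem_span
    (LinearMap.funLeft ℤ_[p] ℚ_[p] (tailIdx l) ∘ₗ L'.subtype) (b'.mem_span ⟨z, hz⟩)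
  rw [← Set.range_comp] at hz'
  change v ∘ tailIdx l + z ∘ tailIdx l ∈ _
  rwa [hv0, zero_add]

lemma blockTriangular_of_zAct_le {ι : Type*} [Fintype ι] {G : Matrix (Fin n) (Fin n) ℚ_[p]}
    {L' : Submodule ℤ_[p] (Fin n → ℚ_[p])} (b' : Module.Basis ι ℤ_[p] L')
    (h : zAct G ((stdSubspace p n l).restrictScalars ℤ_[p]) ≤
      (stdSubspace p n l).restrictScalars ℤ_[p] ⊔ L') :
    G.BlockTriangular (tailBlocks l) := by
  intro i j hij
  obtain ⟨hj, hi⟩ : (j : ℕ) < l ∧ l ≤ (i : ℕ) := by simpa [tailBlocks, Bool.lt_iff] using hij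
  obtain ⟨i, rfl⟩ := exists_tailIdx_eq l hi
  have hzero : (G *ᵥ Pi.single j 1) ∘ tailIdx l = 0 := by
    have hS := Padic.isBounded_span_range fun i => (b' i : Fin n → ℚ_[p]) ∘ tailIdx l
    refine hS.eq_zero_of_forall_smul_mem fun c : ℚ_[p] => ?_
    have hc : c • Pi.single j 1 ∈ stdSubspace p n l :=
      Submodule.smul_mem _ c (Submodule.subset_span ⟨j, hj, rfl⟩)
    have hmem := comp_tailIdx_mem_span_of_mem_sup b' (h (Submodule.mem_map_of_mem hc))
    rwa [LinearMap.restrictScalars_apply, mulVecLin_apply, mulVec_smul] at hmem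
  simpa [mulVec_single] using congrFun hzero i

lemma exists_submatrix_mul_tailCoordMatrix_eq {ι κ : Type*} [Fintype ι]
    {G : Matrix (Fin n) (Fin n) ℚ_[p]} (hG : G.BlockTriangular (tailBlocks l))
    {L' : Submodule ℤ_[p] (Fin n → ℚ_[p])} (b' : Module.Basis ι ℤ_[p] L')
    (v : κ → Fin n → ℚ_[p]) (hv : ∀ j, G *ᵥ v j ∈ (stdSubspace p n l).restrictScalars ℤ_[p] ⊔ L') :
    ∃ U : Matrix ι κ ℤ_[p], G.submatrix (tailIdx l) (tailIdx l) * tailCoordMatrix l v =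
      tailCoordMatrix l (fun i => (b' i : Fin n → ℚ_[p])) * U.map ((↑) : ℤ_[p] → ℚ_[p]) := by
  choose u hu using fun j =>
    (Submodule.mem_span_range_iff_exists_fun ℤ_[p]).1 (comp_tailIdx_mem_span_of_mem_sup b' (hv j))
  refine ⟨Matrix.of fun i j => u j i, ?_⟩
  ext i j
  change (G.submatrix (tailIdx l) (tailIdx l) *ᵥ (v j ∘ tailIdx l)) i = _
  rw [← hG.mulVec_comp_tailIdx, ← hu j, Finset.sum_apply, Matrix.mul_apply]
  exact Finset.sum_congr rfl fun k _ => mul_comm _ _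

lemma norm_det_submatrix_tailIdx_pMat (g : SL(n, ℤ_[p]))
    (hg : (pMat g⁻¹).BlockTriangular (tailBlocks l)) :
    ‖((pMat g).submatrix (tailIdx l) (tailIdx l)).det‖ = 1 := by
  have hmul : ((pMat g⁻¹).submatrix (tailIdx l) (tailIdx l)).det *
      ((pMat g).submatrix (tailIdx l) (tailIdx l)).det = 1 := by
    rw [← det_mul, ← hg.submatrix_tailIdx_mul, ← pMat_mul, inv_mul_cancel, pMat_one,
      submatrix_one _ (tailIdx_injective l), det_one]
  have hinv : ‖((pMat g⁻¹).submatrix (tailIdx l) (tailIdx l)).det‖ ≤ 1 :=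
    Padic.norm_det_map_coe_le_one ((g⁻¹ : SL(n, ℤ_[p])).1.submatrix (tailIdx l) (tailIdx l))
  have hle : ‖((pMat g).submatrix (tailIdx l) (tailIdx l)).det‖ ≤ 1 :=
    Padic.norm_det_map_coe_le_one (g.1.submatrix (tailIdx l) (tailIdx l))
  have hnorm := congrArg norm hmul
  rw [norm_mul, norm_one] at hnorm
  nlinarith [mul_le_mul_of_nonneg_right hinv
    (norm_nonneg ((pMat g).submatrix (tailIdx l) (tailIdx l)).det)]

lemma norm_det_tailCoordMatrix_le {L L' : Submodule ℤ_[p] (Fin n → ℚ_[p])}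
    (b : Module.Basis (Fin (n - l)) ℤ_[p] L) (b' : Module.Basis (Fin (n - l)) ℤ_[p] L')
    (g : SL(n, ℤ_[p]))
    (hg : zAct (pMat g) ((stdSubspace p n l).restrictScalars ℤ_[p] ⊔ L) ≤
      (stdSubspace p n l).restrictScalars ℤ_[p] ⊔ L')
    (hg' : zAct (pMat g⁻¹) ((stdSubspace p n l).restrictScalars ℤ_[p] ⊔ L') ≤
      (stdSubspace p n l).restrictScalars ℤ_[p] ⊔ L) :
    ‖(tailCoordMatrix l fun j => (b j : Fin n → ℚ_[p])).det‖ ≤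
      ‖(tailCoordMatrix l fun j => (b' j : Fin n → ℚ_[p])).det‖ := by
  have hT := blockTriangular_of_zAct_le b' ((Submodule.map_mono le_sup_left).trans hg)
  have hT' := blockTriangular_of_zAct_le b ((Submodule.map_mono le_sup_left).trans hg')
  obtain ⟨U, hU⟩ := exists_submatrix_mul_tailCoordMatrix_eq hT b' _ fun j =>
    hg (Submodule.mem_map_of_mem (Submodule.mem_sup_right (b j).2))
  exact Padic.norm_det_le_of_mul_eq U (norm_det_submatrix_tailIdx_pMat g hT') hU

end Lattices

/-- **Proposition 5.7 (types are preserved).**  If `g ∈ SL_n(ℤ_p)` carries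
`V₀ ⊕ L` onto `V₀ ⊕ L'`, where `L, L'` are lattices of
`W₀ = ℚ_p e_{l+1} ⊕ ⋯ ⊕ ℚ_p e_n`, then `L` and `L'` have the same type: the
valuations of the determinants of coordinate matrices of bases of `L` and `L'`
agree modulo `n - l`. -/
theorem type_preserved (p n l : ℕ) [Fact p.Prime]
    (L L' : Submodule ℤ_[p] (Fin n → ℚ_[p]))
    (b : Module.Basis (Fin (n - l)) ℤ_[p] ↥L) (b' : Module.Basis (Fin (n - l)) ℤ_[p] ↥L')
    (g : Matrix.SpecialLinearGroup (Fin n) ℤ_[p])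
    (hg : zAct (pMat g) ((stdSubspace p n l).restrictScalars ℤ_[p] ⊔ L) =
      (stdSubspace p n l).restrictScalars ℤ_[p] ⊔ L') :
    (Matrix.det (Matrix.of fun i j : Fin (n - l) =>
        ((b j : Fin n → ℚ_[p]) ⟨l + i.val, by have := i.isLt; omega⟩))).valuation ≡
      (Matrix.det (Matrix.of fun i j : Fin (n - l) =>
        ((b' j : Fin n → ℚ_[p]) ⟨l + i.val, by have := i.isLt; omega⟩))).valuation
      [ZMOD ((n : ℤ) - (l : ℤ))] := by
  have hg' : zAct (pMat g⁻¹) ((stdSubspace p n l).restrictScalars ℤ_[p] ⊔ L') =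
      (stdSubspace p n l).restrictScalars ℤ_[p] ⊔ L := by
    rw [← hg, zAct_inv_zAct]
  have hle := norm_det_tailCoordMatrix_le b b' g hg.le hg'.le
  have hge := norm_det_tailCoordMatrix_le b' b g⁻¹ hg'.le (by rw [inv_inv]; exact hg.le)
  exact congrArg (· % ((n : ℤ) - l)) (Padic.valuation_eq_of_norm_eq (le_antisymm hle hge))
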